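/- Let φ ∈ 𝓘 be convex (φ strictly increasing, φ(0)=0, φ(1)=1, φ(∞)=∞), p ∈ (1,n), and Ω, Ω₁ bounded convex domains containing the origin. Then the homogeneous Orlicz L_φ mixed p-capacity satisfies Ĉ_{p,φ}(Ω, Ω₁) ≥ (C_p(Ω₁)/C_p(Ω))^{1/(n-p)}. -/

import Mathlib

open MeasureTheory Set Filter

/-- The support function `h_K(u) = sup_{x ∈ K} ⟨x, u⟩` of a set `K ⊆ ℝⁿ`. -/
noncomputable def suppFn (n : ℕ) (K : Set (EuclideanSpace ℝ (Fin n)))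
    (u : EuclideanSpace ℝ (Fin n)) : ℝ :=
  sSup ((fun x => (inner ℝ x u : ℝ)) '' K)

/-- A bounded open convex domain containing the origin. -/
def IsConvexDomain (n : ℕ) (Ω : Set (EuclideanSpace ℝ (Fin n))) : Prop :=
  IsOpen Ω ∧ Convex ℝ Ω ∧ Bornology.IsBounded Ω ∧ (0 : EuclideanSpace ℝ (Fin n)) ∈ Ω

/-!
The right derivative `c` of `φ` at `1` gives the supporting line `φ t ≥ 1 + c (t - 1)`, and
`c ≥ 1 > 0` because `φ` has slope `1` on `[0, 1]`. Multiplying by `h_Ω` at `t = h_{Ω₁}/(η h_Ω)`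
and integrating against `μ_p`, the defining equation of `η` and the Poincaré formula give
`C_p(Ω) ≥ C_p(Ω) + c (C_p(Ω, Ω₁)/η - C_p(Ω))`, i.e. `C_p(Ω, Ω₁) ≤ η C_p(Ω)`; the `p`-capacitary
Minkowski inequality bounds `C_p(Ω, Ω₁)` from below.
-/

namespace ConvexOn

variable {S : Set ℝ} {f : ℝ → ℝ} {x y : ℝ}

theorem add_rightDeriv_mul_sub_le (hf : ConvexOn ℝ S f) (hx : x ∈ interior S) (hy : y ∈ S) :
    f x + derivWithin f (Ioi x) x * (y - x) ≤ f y := by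
  rcases lt_trichotomy y x with hyx | rfl | hxy
  · have hslope : slope f y x ≤ derivWithin f (Ioi x) x :=
      (hf.slope_le_leftDeriv_of_mem_interior hy hx hyx).trans
        (hf.leftDeriv_le_rightDeriv_of_mem_interior hx)
    rw [slope_def_field, div_le_iff₀ (by linarith)] at hslope
    linarith
  · simp
  · have hslope : derivWithin f (Ioi x) x ≤ slope f x y :=
      hf.rightDeriv_le_slope_of_mem_interior hx hy hxy
    rw [slope_def_field, le_div_iff₀ (by linarith)] at hslope
    linarith

theorem slope_le_rightDeriv (hf : ConvexOn ℝ S f) (hx : x ∈ S) (hy : y ∈ interior S)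
    (hxy : x < y) : slope f x y ≤ derivWithin f (Ioi y) y :=
  (hf.slope_le_leftDeriv_of_mem_interior hx hy hxy).trans
    (hf.leftDeriv_le_rightDeriv_of_mem_interior hy)

end ConvexOn

/-- Jensen's inequality for `φ` against the measure `f dμ`. -/
theorem integral_le_integral_of_integral_comp_div_mul_le {α : Type*} [MeasurableSpace α]
    {μ : Measure α} {φ : ℝ → ℝ} (hφ0 : φ 0 = 0) (hφ1 : φ 1 = 1)
    (hφconv : ConvexOn ℝ (Ici 0) φ) {f g : α → ℝ} (hf : ∀ a, 0 < f a) (hg : ∀ a, 0 ≤ g a)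
    (hfi : Integrable f μ) (hφi : Integrable (fun a => φ (g a / f a) * f a) μ)
    (h : ∫ a, φ (g a / f a) * f a ∂μ ≤ ∫ a, f a ∂μ) :
    ∫ a, g a ∂μ ≤ ∫ a, f a ∂μ := by
  by_cases hgi : Integrable g μ
  swap
  · rw [integral_undef hgi]
    exact integral_nonneg fun a => (hf a).le
  have hone : (1 : ℝ) ∈ interior (Ici 0) := by simp
  set c := derivWithin φ (Ioi 1) 1
  have hc : 0 < c := by
    have hslope := hφconv.slope_le_rightDeriv self_mem_Ici hone one_pos
    rw [slope_def_field, hφ0, hφ1] at hslope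
    linarith
  have hline : ∀ a, f a + c * (g a - f a) ≤ φ (g a / f a) * f a := by
    intro a
    have hfa := hf a
    have hsupport :=
      hφconv.add_rightDeriv_mul_sub_le hone (div_nonneg (hg a) hfa.le : g a / f a ∈ Ici 0)
    rw [hφ1] at hsupport
    calc f a + c * (g a - f a) = (1 + c * (g a / f a - 1)) * f a := by field_simp
      _ ≤ φ (g a / f a) * f a := mul_le_mul_of_nonneg_right hsupport hfa.le
  have hdiff : Integrable (fun a => c * (g a - f a)) μ := (hgi.sub hfi).const_mul c
  have hint :=
    (integral_mono (f := fun a => f a + c * (g a - f a)) (hfi.add hdiff) hφi hline).trans h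
  rw [integral_add hfi hdiff, integral_const_mul, integral_sub hgi hfi] at hint
  nlinarith

theorem rpow_div_le_of_rpow_one_sub_mul_rpow_le {a b η s : ℝ} (ha : 0 < a) (hb : 0 ≤ b)
    (h : a ^ (1 - s) * b ^ s ≤ η * a) : (b / a) ^ s ≤ η := by
  have has : 0 < a ^ s := Real.rpow_pos_of_pos ha s
  rw [Real.rpow_sub ha, Real.rpow_one] at h
  rw [Real.div_rpow hb ha.le, div_le_iff₀ has]
  calc b ^ s = a / a ^ s * b ^ s / a * a ^ s := by field_simp
    _ ≤ η * a / a * a ^ s := by gcongr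
    _ = η * a ^ s := by field_simp

theorem suppFn_bddAbove {n : ℕ} {K : Set (EuclideanSpace ℝ (Fin n))}
    (hK : Bornology.IsBounded K) (u : EuclideanSpace ℝ (Fin n)) :
    BddAbove ((fun x => (inner ℝ x u : ℝ)) '' K) := by
  obtain ⟨M, hM⟩ := hK.exists_norm_le
  refine ⟨M * ‖u‖, ?_⟩
  rintro _ ⟨x, hx, rfl⟩
  exact (real_inner_le_norm x u).trans (mul_le_mul_of_nonneg_right (hM x hx) (norm_nonneg u))

theorem suppFn_nonneg {n : ℕ} {K : Set (EuclideanSpace ℝ (Fin n))}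
    (hK : Bornology.IsBounded K) (h0 : 0 ∈ K) (u : EuclideanSpace ℝ (Fin n)) :
    0 ≤ suppFn n K u := by
  simpa [suppFn] using le_csSup (suppFn_bddAbove hK u) ⟨0, h0, rfl⟩

theorem suppFn_pos {n : ℕ} {K : Set (EuclideanSpace ℝ (Fin n))}
    (hK : Bornology.IsBounded K) (h0 : K ∈ nhds 0) {u : EuclideanSpace ℝ (Fin n)} (hu : u ≠ 0) :
    0 < suppFn n K u := by
  obtain ⟨r, hr, hball⟩ := Metric.mem_nhds_iff.1 h0
  have hu' : 0 < ‖u‖ := norm_pos_iff.2 hu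
  set t := r / (2 * ‖u‖) with ht_def
  have ht : 0 < t := by positivity
  have hmem : t • u ∈ K := hball <| by
    rw [Metric.mem_ball, dist_zero_right, norm_smul, Real.norm_of_nonneg ht.le, ht_def]
    field_simp
    linarith
  calc 0 < t * ‖u‖ ^ 2 := by positivity
    _ = inner ℝ (t • u) u := by rw [real_inner_smul_left, real_inner_self_eq_norm_sq]
    _ ≤ suppFn n K u := le_csSup (suppFn_bddAbove hK u) ⟨_, hmem, rfl⟩

theorem homogeneous_orlicz_minkowski_general (n : ℕ) (p : ℝ) (hp : 1 < p) (hpn : p < n)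
    (φ : ℝ → ℝ)
    (hφ0 : φ 0 = 0) (hφ1 : φ 1 = 1)
    (hφconv : ConvexOn ℝ (Ici 0) φ)
    (Ω Ω₁ : Set (EuclideanSpace ℝ (Fin n)))
    (hΩ : IsConvexDomain n Ω) (hΩ₁ : IsConvexDomain n Ω₁)
    (μp : Measure (Metric.sphere (0 : EuclideanSpace ℝ (Fin n)) 1))
    (Cp Cp1 : ℝ) (hCp : 0 < Cp) (hCp1 : 0 < Cp1)
    (hPoincare : (p - 1) / ((n : ℝ) - p) * ∫ u, suppFn n Ω ↑u ∂μp = Cp)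
    (hMinkowski : (p - 1) / ((n : ℝ) - p) * ∫ u, suppFn n Ω₁ ↑u ∂μp
      ≥ Cp ^ (((n : ℝ) - p - 1) / ((n : ℝ) - p)) * Cp1 ^ (1 / ((n : ℝ) - p))) :
    ∀ η : ℝ, 0 < η →
      (p - 1) / ((n : ℝ) - p) *
          ∫ u, φ (suppFn n Ω₁ ↑u / (η * suppFn n Ω ↑u)) * suppFn n Ω ↑u ∂μp = Cp →
      (Cp1 / Cp) ^ (1 / ((n : ℝ) - p)) ≤ η := by
  intro η hη hη_eq
  have hnp : (0 : ℝ) < n - p := by linarith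
  have hk : 0 < (p - 1) / ((n : ℝ) - p) := div_pos (by linarith) hnp
  have hI : Integrable (fun u : Metric.sphere (0 : EuclideanSpace ℝ (Fin n)) 1 =>
      suppFn n Ω u) μp :=
    .of_integral_ne_zero fun h => by simp [h] at hPoincare; linarith
  have hJ : Integrable (fun u : Metric.sphere (0 : EuclideanSpace ℝ (Fin n)) 1 =>
      φ (suppFn n Ω₁ u / (η * suppFn n Ω u)) * suppFn n Ω u) μp :=
    .of_integral_ne_zero fun h => by simp [h] at hη_eq; linarith
  have hJI : ∫ u, φ (suppFn n Ω₁ ↑u / (η * suppFn n Ω ↑u)) * suppFn n Ω ↑u ∂μp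
      = ∫ u, suppFn n Ω ↑u ∂μp := mul_left_cancel₀ hk.ne' (hη_eq.trans hPoincare.symm)
  have hmixed : ∫ u, suppFn n Ω₁ ↑u / η ∂μp ≤ ∫ u, suppFn n Ω ↑u ∂μp :=
    integral_le_integral_of_integral_comp_div_mul_le hφ0 hφ1 hφconv
      (fun u => suppFn_pos hΩ.2.2.1 (hΩ.1.mem_nhds hΩ.2.2.2) (ne_zero_of_mem_unit_sphere u))
      (fun u => div_nonneg (suppFn_nonneg hΩ₁.2.2.1 hΩ₁.2.2.2 _) hη.le) hI
      (by simpa only [div_div] using hJ) (by simpa only [div_div] using hJI.le)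
  rw [integral_div, div_le_iff₀ hη] at hmixed
  refine rpow_div_le_of_rpow_one_sub_mul_rpow_le hCp hCp1.le ?_
  calc Cp ^ (1 - 1 / ((n : ℝ) - p)) * Cp1 ^ (1 / ((n : ℝ) - p))
      = Cp ^ (((n : ℝ) - p - 1) / ((n : ℝ) - p)) * Cp1 ^ (1 / ((n : ℝ) - p)) := by
        rw [one_sub_div hnp.ne']
    _ ≤ (p - 1) / ((n : ℝ) - p) * ∫ u, suppFn n Ω₁ ↑u ∂μp := hMinkowski
    _ ≤ (p - 1) / ((n : ℝ) - p) * ((∫ u, suppFn n Ω ↑u ∂μp) * η) := by gcongr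
    _ = η * Cp := by rw [← hPoincare]; ring

/-- if `φ ∈ 𝓘` is convex, then the homogeneous Orlicz `L_φ` mixed `p`-capacity
(the unique `η > 0` with `(p−1)/(n−p) ∫ φ(h_{Ω₁}/(η h_Ω)) h_Ω dμ_p(Ω,·) = C_p(Ω)`) satisfies
`Ĉ_{p,φ}(Ω,Ω₁) ≥ (C_p(Ω₁)/C_p(Ω))^{1/(n-p)}`.  The `p`-capacities `Cp, Cp1` are linked to the
`p`-capacitary measure `μp` of `Ω` by the Poincaré formula and the `p`-capacitary Minkowski
inequality. -/
theorem homogeneous_orlicz_minkowski (n : ℕ) (p : ℝ) (hp : 1 < p) (hpn : p < n)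
    (φ : ℝ → ℝ) (hφc : ContinuousOn φ (Ici 0)) (hφm : StrictMonoOn φ (Ici 0))
    (hφ0 : φ 0 = 0) (hφ1 : φ 1 = 1) (hφtop : Tendsto φ atTop atTop)
    (hφconv : ConvexOn ℝ (Ici 0) φ)
    (Ω Ω₁ : Set (EuclideanSpace ℝ (Fin n)))
    (hΩ : IsConvexDomain n Ω) (hΩ₁ : IsConvexDomain n Ω₁)
    (μp : Measure (Metric.sphere (0 : EuclideanSpace ℝ (Fin n)) 1)) [IsFiniteMeasure μp]
    (Cp Cp1 : ℝ) (hCp : 0 < Cp) (hCp1 : 0 < Cp1)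
    (hPoincare : (p - 1) / ((n : ℝ) - p) * ∫ u, suppFn n Ω ↑u ∂μp = Cp)
    (hMinkowski : (p - 1) / ((n : ℝ) - p) * ∫ u, suppFn n Ω₁ ↑u ∂μp
      ≥ Cp ^ (((n : ℝ) - p - 1) / ((n : ℝ) - p)) * Cp1 ^ (1 / ((n : ℝ) - p))) :
    ∀ η : ℝ, 0 < η →
      (p - 1) / ((n : ℝ) - p) *
          ∫ u, φ (suppFn n Ω₁ ↑u / (η * suppFn n Ω ↑u)) * suppFn n Ω ↑u ∂μp = Cp →
      (Cp1 / Cp) ^ (1 / ((n : ℝ) - p)) ≤ η :=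
  homogeneous_orlicz_minkowski_general n p hp hpn φ hφ0 hφ1 hφconv Ω Ω₁ hΩ hΩ₁ μp Cp Cp1 hCp hCp1
    hPoincare hMinkowski
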